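/- arXiv:1312.4271 — 5 statements merged into one kernel-verified Lean document; each statement's English description precedes it below -/
import Mathlib

section
/- Let F be a finite simple graph on k vertices and let G and G' be two graphs on the same vertex set {1,…,n} that differ in exactly one edge (that is, their edge sets differ in exactly one pair). Then |t(F,G) − t(F,G')| ≤ k(k−1)/(n(n−1)). -/
/-!
A copy of `F` in `G` that is not a copy of `F` in `G'` must send some edge of `F` onto the
unique edge `uv` in which `G` and `G'` differ, so it maps an ordered pair of distinct vertices
of `F` to `(u, v)`. For each of the `k(k-1)` such pairs there are at most `(n-2)_{k-2}`
injections, and `(n)_k = n(n-1)(n-2)_{k-2}`.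
-/

open MeasureTheory Filter
open scoped Classical

noncomputable section

/-- Number of injective graph homomorphisms of `F` into `G`. -/
def injHomCount {k n : ℕ} (F : SimpleGraph (Fin k)) (G : SimpleGraph (Fin n)) : ℕ :=
  Nat.card {f : Fin k → Fin n // Function.Injective f ∧ ∀ i j, F.Adj i j → G.Adj (f i) (f j)}

/-- Normalised subgraph count `t(F,G) = |inj(F,G)| / (n)_k`. -/
def subCount {k n : ℕ} (F : SimpleGraph (Fin k)) (G : SimpleGraph (Fin n)) : ℝ :=
  (injHomCount F G : ℝ) / (n.descFactorial k : ℝ)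

open Finset Fintype SimpleGraph

section Embedding

variable {α β : Type*} [Fintype α] [Fintype β]

theorem card_embedding_apply_eq_apply_eq_le {i j : α} (hij : i ≠ j) (u v : β) :
    card {f : α ↪ β // f i = u ∧ f j = v} ≤ (card β - 2).descFactorial (card α - 2) := by
  rcases eq_or_ne u v with rfl | huv
  · have : IsEmpty {f : α ↪ β // f i = u ∧ f j = u} :=
      ⟨fun f => hij (f.1.injective (f.2.1.trans f.2.2.symm))⟩
    simp
  let restrict (f : {f : α ↪ β // f i = u ∧ f j = v}) :
      ((({i, j} : Finset α)ᶜ : Finset α) ↪ (({u, v} : Finset β)ᶜ : Finset β)) :=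
    ⟨fun l => ⟨f.1 l, by
      have hl := l.2
      simp only [mem_compl, mem_insert, mem_singleton, not_or] at hl ⊢
      exact ⟨fun h => hl.1 (f.1.injective (h.trans f.2.1.symm)),
        fun h => hl.2 (f.1.injective (h.trans f.2.2.symm))⟩⟩,
     fun l l' h => Subtype.ext (f.1.injective (congrArg Subtype.val h))⟩
  have restrict_injective : Function.Injective restrict := by
    intro f g hfg
    refine Subtype.ext (DFunLike.ext _ _ fun l => ?_)
    by_cases hl : l = i
    · rw [hl, f.2.1, g.2.1]
    by_cases hl' : l = j
    · rw [hl', f.2.2, g.2.2]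
    have hmem : l ∈ (({i, j} : Finset α)ᶜ : Finset α) := by simp [hl, hl']
    exact congrArg Subtype.val (DFunLike.congr_fun hfg ⟨l, hmem⟩)
  refine (card_le_of_injective restrict restrict_injective).trans_eq ?_
  rw [card_embedding_eq, Fintype.card_coe, Fintype.card_coe, card_compl, card_compl,
    card_pair hij, card_pair huv]

theorem card_embedding_exists_apply_eq_apply_eq_le (u v : β) :
    #{f : α ↪ β | ∃ i j, i ≠ j ∧ f i = u ∧ f j = v} ≤
      card α * (card α - 1) * (card β - 2).descFactorial (card α - 2) := by
  have hcover : ({f : α ↪ β | ∃ i j, i ≠ j ∧ f i = u ∧ f j = v} : Finset _) ⊆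
      (univ : Finset α).offDiag.biUnion fun p => {f : α ↪ β | f p.1 = u ∧ f p.2 = v} := by
    intro f hf
    obtain ⟨i, j, hij, hi, hj⟩ := (mem_filter.1 hf).2
    exact mem_biUnion.2 ⟨(i, j), by simpa using hij, by simp [hi, hj]⟩
  calc _ ≤ _ := card_le_card hcover
    _ ≤ ∑ p ∈ (univ : Finset α).offDiag, #{f : α ↪ β | f p.1 = u ∧ f p.2 = v} :=
      card_biUnion_le
    _ ≤ #(univ : Finset α).offDiag * (card β - 2).descFactorial (card α - 2) := by
      refine sum_le_card_nsmul _ _ _ fun p hp => ?_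
      rw [← Fintype.card_subtype]
      exact card_embedding_apply_eq_apply_eq_le (mem_offDiag.1 hp).2.2 u v
    _ = _ := by rw [offDiag_card, card_univ, Nat.mul_sub_one]

end Embedding

section Copy

variable {α β : Type*}

theorem SimpleGraph.Copy.toEmbedding_injective {F : SimpleGraph α} {G : SimpleGraph β} :
    Function.Injective (Copy.toEmbedding : Copy F G → α ↪ β) :=
  fun _ _ h => Copy.ext fun a => DFunLike.congr_fun h a

variable [Fintype α] [Fintype β]

theorem SimpleGraph.labelledCopyCount_eq_card_image_toEmbedding (F : SimpleGraph α)
    (G : SimpleGraph β) :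
    G.labelledCopyCount F = #((univ : Finset (Copy F G)).image Copy.toEmbedding) := by
  rw [labelledCopyCount, card_image_of_injective _ Copy.toEmbedding_injective, card_univ]

theorem SimpleGraph.labelledCopyCount_le_add_of_edgeSet_sdiff_subset {F : SimpleGraph α}
    {G G' : SimpleGraph β} {u v : β} (h : G.edgeSet \ G'.edgeSet ⊆ {s(u, v)}) :
    G.labelledCopyCount F ≤ G'.labelledCopyCount F +
      card α * (card α - 1) * (card β - 2).descFactorial (card α - 2) := by
  have hcover : (univ : Finset (Copy F G)).image Copy.toEmbedding ⊆
      (univ : Finset (Copy F G')).image Copy.toEmbedding ∪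
        ({f : α ↪ β | ∃ i j, i ≠ j ∧ f i = u ∧ f j = v} : Finset _) := by
    rintro _ hf
    obtain ⟨c, -, rfl⟩ := mem_image.1 hf
    by_cases hc : ∀ i j, F.Adj i j → G'.Adj (c i) (c j)
    · exact mem_union_left _ <|
        mem_image.2 ⟨⟨⟨c, hc _ _⟩, c.injective⟩, mem_univ _, rfl⟩
    push Not at hc
    obtain ⟨i, j, hadj, hnadj⟩ := hc
    have hedge : s(c i, c j) = s(u, v) := h ⟨c.toHom.map_adj hadj, hnadj⟩
    refine mem_union_right _ (mem_filter.2 ⟨mem_univ _, ?_⟩)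
    rcases Sym2.eq_iff.1 hedge with ⟨hi, hj⟩ | ⟨hi, hj⟩
    · exact ⟨i, j, hadj.ne, hi, hj⟩
    · exact ⟨j, i, hadj.ne', hj, hi⟩
  rw [labelledCopyCount_eq_card_image_toEmbedding, labelledCopyCount_eq_card_image_toEmbedding]
  calc _ ≤ _ := card_le_card hcover
    _ ≤ _ := card_union_le _ _
    _ ≤ _ := Nat.add_le_add_left (card_embedding_exists_apply_eq_apply_eq_le u v) _

end Copy

theorem injHomCount_eq_labelledCopyCount {k n : ℕ} (F : SimpleGraph (Fin k))
    (G : SimpleGraph (Fin n)) : injHomCount F G = G.labelledCopyCount F := by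
  rw [labelledCopyCount, Fintype.card_eq_nat_card]
  exact Nat.card_congr
    { toFun f := ⟨⟨f.1, f.2.2 _ _⟩, f.2.1⟩
      invFun c := ⟨c, c.injective, fun _ _ => c.toHom.map_adj⟩
      left_inv _ := rfl
      right_inv _ := rfl }

theorem div_descFactorial_le_div {k n : ℕ} {x : ℝ}
    (hx : x ≤ (k * (k - 1) * (n - 2).descFactorial (k - 2) : ℕ)) :
    x / n.descFactorial k ≤ ((k : ℝ) * ((k : ℝ) - 1)) / ((n : ℝ) * ((n : ℝ) - 1)) := by
  match k, n with
  | 0, _ | 1, _ =>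
    have hx : x ≤ 0 := by simpa using hx
    exact (div_nonpos_of_nonpos_of_nonneg hx (Nat.cast_nonneg _)).trans (by simp)
  | k + 2, 0 | k + 2, 1 => simp
  | k + 2, n + 2 =>
    have hm : x / n.descFactorial k ≤ (k + 2) * (k + 1) :=
      div_le_of_le_mul₀ (Nat.cast_nonneg _) (by positivity) (by simpa using hx)
    calc x / (n + 2).descFactorial (k + 2)
        = x / n.descFactorial k / ((n + 2) * (n + 1)) := by
          rw [Nat.succ_descFactorial_succ, Nat.succ_descFactorial_succ, div_div]
          push_cast
          ring_nf
      _ ≤ (k + 2) * (k + 1) / ((n + 2) * (n + 1)) := by gcongr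
      _ = _ := by push_cast; ring

/-- If two graphs `G, G'` on the vertex set `{1,…,n}` differ in exactly one
edge, then `|t(F,G) - t(F,G')| ≤ k(k-1)/(n(n-1))` for any graph `F` on `k` vertices. -/
theorem subCount_edge_change {k n : ℕ} (F : SimpleGraph (Fin k))
    (G G' : SimpleGraph (Fin n))
    (hdiff : ∃ e : Sym2 (Fin n), symmDiff G.edgeSet G'.edgeSet = {e}) :
    |subCount F G - subCount F G'| ≤ ((k : ℝ) * ((k : ℝ) - 1)) / ((n : ℝ) * ((n : ℝ) - 1)) := by
  obtain ⟨⟨u, v⟩, he⟩ := hdiff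
  have hGG' : G.edgeSet \ G'.edgeSet ⊆ {s(u, v)} := he ▸ Set.subset_union_left
  have hG'G : G'.edgeSet \ G.edgeSet ⊆ {s(u, v)} := he ▸ Set.subset_union_right
  have h₁ := labelledCopyCount_le_add_of_edgeSet_sdiff_subset (F := F) hGG'
  have h₂ := labelledCopyCount_le_add_of_edgeSet_sdiff_subset (F := F) hG'G
  simp only [Fintype.card_fin] at h₁ h₂
  rw [subCount, subCount, div_sub_div_same, abs_div, Nat.abs_cast,
    injHomCount_eq_labelledCopyCount, injHomCount_eq_labelledCopyCount]
  refine div_descFactorial_le_div (abs_sub_le_iff.2 ⟨?_, ?_⟩)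
  · rw [sub_le_iff_le_add']
    exact_mod_cast h₁
  · rw [sub_le_iff_le_add']
    exact_mod_cast h₂
end
end

section
/- Let κ be a positive and connected standard kernel and let K_κ(x, dy) = κ(x,y) dy / ∫_0^1 κ(x,v) dv be the associated Markov kernel on [0,1]. If A ⊆ [0,1] is a measurable invariant set, i.e. K_κ(x,A) = 1 for all x ∈ A, then the Lebesgue measure of A is either 0 or 1; moreover, Vol(A) = 0 is impossible for nonempty invariant A, so every nonempty measurable invariant set has Lebesgue measure 1. -/
open MeasureTheory Filter
open scoped ENNReal Classical

noncomputable section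

/-- The Markov transition `K_κ(x,A) = (∫_{A∩[0,1]} κ(x,y) dy) / (∫_0^1 κ(x,v) dv)`. -/
def markovStep (κ : ℝ → ℝ → ℝ) (x : ℝ) (A : Set ℝ) : ℝ :=
  (∫ y in A ∩ Set.Icc (0:ℝ) 1, κ x y) / ∫ v in Set.Icc (0:ℝ) 1, κ x v

/-- for a positive and connected standard kernel `κ`, every measurable
invariant set `A` of the Markov kernel `K_κ` (i.e. `K_κ(x,A) = 1` for all `x ∈ A`) has
Lebesgue measure `0` or `1`; moreover a nonempty invariant set has Lebesgue measure `1`. -/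
theorem invariant_set_measure
    (κ : ℝ → ℝ → ℝ) (hκmeas : Measurable (Function.uncurry κ))
    (hκsymm : ∀ a ∈ Set.Icc (0:ℝ) 1, ∀ b ∈ Set.Icc (0:ℝ) 1, κ a b = κ b a)
    (hκrange : ∀ a ∈ Set.Icc (0:ℝ) 1, ∀ b ∈ Set.Icc (0:ℝ) 1, κ a b ∈ Set.Icc (0:ℝ) 1)
    (hκpos : ∀ x ∈ Set.Icc (0:ℝ) 1, 0 < ∫ y in Set.Icc (0:ℝ) 1, κ x y)
    (hκconn : ∀ A : Set ℝ, A ⊆ Set.Icc 0 1 → MeasurableSet A →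
      0 < volume A → volume A < 1 →
      0 < ∫ x in A, ∫ y in Set.Icc (0:ℝ) 1 \ A, κ x y)
    (A : Set ℝ) (hA : A ⊆ Set.Icc (0:ℝ) 1) (hAmeas : MeasurableSet A)
    (hAinv : ∀ x ∈ A, markovStep κ x A = 1) :
    (volume A = 0 ∨ volume A = 1) ∧ (A.Nonempty → volume A = 1) := by
  have hAI : A ∩ Set.Icc (0:ℝ) 1 = A := Set.inter_eq_left.mpr hA
  -- key: numerator equals denominator for x ∈ A
  have hnum : ∀ x ∈ A, (∫ y in A, κ x y) = ∫ v in Set.Icc (0:ℝ) 1, κ x v := by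
    intro x hx
    have hd := hκpos x (hA hx)
    have h := hAinv x hx
    rw [markovStep, hAI, div_eq_one_iff_eq hd.ne'] at h
    exact h
  have hmx : ∀ x : ℝ, Measurable (κ x) := fun x => hκmeas.of_uncurry_left
  have hint : ∀ x ∈ Set.Icc (0:ℝ) 1, IntegrableOn (κ x) (Set.Icc (0:ℝ) 1) := by
    intro x hx
    apply Measure.integrableOn_of_bounded (M := 1)
    · simp [Real.volume_Icc]
    · exact (hmx x).aestronglyMeasurable
    · filter_upwards [ae_restrict_mem measurableSet_Icc] with y hy
      have := hκrange x hx y hy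
      rw [Real.norm_eq_abs, abs_of_nonneg this.1]
      exact this.2
  -- inner integral vanishes on A
  have hinner : ∀ x ∈ A, (∫ y in Set.Icc (0:ℝ) 1 \ A, κ x y) = 0 := by
    intro x hx
    have hd := MeasureTheory.integral_diff hAmeas (hint x (hA hx)) hA
    rw [hd, hnum x hx, sub_self]
  have hdich : volume A = 0 ∨ volume A = 1 := by
    by_contra h
    push_neg at h
    obtain ⟨h0, h1⟩ := h
    have hle : volume A ≤ 1 := by
      have := measure_mono hA (μ := volume)
      simpa [Real.volume_Icc] using this
    have hconn := hκconn A hA hAmeas (pos_iff_ne_zero.mpr h0) (lt_of_le_of_ne hle h1)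
    have : (∫ x in A, ∫ y in Set.Icc (0:ℝ) 1 \ A, κ x y) = 0 := by
      rw [setIntegral_congr_fun hAmeas (g := fun _ => (0:ℝ)) (fun x hx => hinner x hx)]
      simp
    rw [this] at hconn
    exact lt_irrefl 0 hconn
  refine ⟨hdich, ?_⟩
  rintro ⟨x, hx⟩
  rcases hdich with h0 | h1
  · have hz : (∫ y in A, κ x y) = 0 := by
      rw [Measure.restrict_eq_zero.mpr h0]; simp
    have := hnum x hx
    rw [hz] at this
    exact absurd this.symm (hκpos x (hA hx)).ne'
  · exact h1
end
end

section
/- Let λ > 0 and let κ be a standard kernel with inf_{0 ≤ x,y ≤ 1} κ(x,y) > 0. Then there exists α* > −1 and a unique probability measure π on [0,1] which is absolutely continuous with respect to Lebesgue measure and whose density p satisfies p(x) = (λ/(1+α*)) ∫_0^1 κ(x,u) p(u) du for almost every x ∈ [0,1]. -/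
/-!
The normalized operator `T f = K f / ∫ K f` maps probability densities to densities with values
in `[m, m⁻¹]`, where `m > 0` is a lower bound of the kernel. Because `κ ≥ m`, a comparison
`A g ≤ f ≤ B g` of densities improves to `(A + m (1 - A)) K g ≤ K f ≤ (B - m (B - 1)) K g`, and
normalization rescales both sides by the same factor, so the projective gap `B / A - 1` shrinks
by the factor `1 - m` under `T`. Hence `|Tⁿ f - Tⁿ g|` decays geometrically, uniformly in the
densities `f` and `g`: the iterates of `T` on the constant density converge to a fixed point `p`,
and it is the only one. A density solving the eigen-equation almost everywhere agrees a.e. with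
`T` of itself, which is then a fixed point, hence `p`. The Malthusian parameter is
`α* = λ ∫ K p - 1`.
-/

open MeasureTheory Filter Function Set Topology

variable {α : Type*} [MeasurableSpace α] {μ : Measure α}

structure IsUniformlyPositiveKernel (κ : α → α → ℝ) (m : ℝ) : Prop where
  measurable_uncurry : Measurable (uncurry κ)
  pos : 0 < m
  le_apply : ∀ x u, m ≤ κ x u
  apply_le_one : ∀ x u, κ x u ≤ 1

theorem IsUniformlyPositiveKernel.le_one [Nonempty α] {κ : α → α → ℝ} {m : ℝ}
    (hκ : IsUniformlyPositiveKernel κ m) : m ≤ 1 := by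
  obtain ⟨x⟩ := ‹Nonempty α›
  exact (hκ.le_apply x x).trans (hκ.apply_le_one x x)

structure IsDensity (μ : Measure α) (f : α → ℝ) : Prop where
  measurable : Measurable f
  nonneg : ∀ x, 0 ≤ f x
  integral_eq_one : ∫ x, f x ∂μ = 1

noncomputable def kernelOp (μ : Measure α) (κ : α → α → ℝ) (f : α → ℝ) (x : α) : ℝ :=
  ∫ u, κ x u * f u ∂μ

noncomputable def normalizedKernelOp (μ : Measure α) (κ : α → α → ℝ) (f : α → ℝ) (x : α) : ℝ :=
  kernelOp μ κ f x / ∫ y, kernelOp μ κ f y ∂μ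

namespace IsDensity

variable {f g : α → ℝ} {A B : ℝ}

theorem integrable (hf : IsDensity μ f) : Integrable f μ :=
  Integrable.of_integral_ne_zero (by simp [hf.integral_eq_one])

theorem one [IsProbabilityMeasure μ] : IsDensity μ fun _ => 1 :=
  ⟨measurable_const, fun _ => zero_le_one, by simp⟩

theorem le_one_of_smul_le (hf : IsDensity μ f) (hg : IsDensity μ g) (h : A • g ≤ f) : A ≤ 1 := by
  simpa [integral_const_mul, hf.integral_eq_one, hg.integral_eq_one] using
    integral_mono (hg.integrable.const_mul A) hf.integrable h

theorem one_le_of_le_smul (hf : IsDensity μ f) (hg : IsDensity μ g) (h : f ≤ B • g) : 1 ≤ B := by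
  simpa [integral_const_mul, hf.integral_eq_one, hg.integral_eq_one] using
    integral_mono hf.integrable (hg.integrable.const_mul B) h

theorem abs_sub_le_of_mem_Icc_smul (hf : IsDensity μ f) (hg : IsDensity μ g) (hA : 0 < A)
    (hfg : f ∈ Icc (A • g) (B • g)) (x : α) : |f x - g x| ≤ (B / A - 1) * g x := by
  have hA1 := hf.le_one_of_smul_le hg hfg.1
  have hB1 := hf.one_le_of_le_smul hg hfg.2
  have hlo : A * g x ≤ f x := hfg.1 x
  have hhi : f x ≤ B * g x := hfg.2 x
  have hgap : B - A ≤ B / A - 1 := by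
    rw [le_sub_iff_add_le, le_div_iff₀ hA]; nlinarith
  have hg0 := hg.nonneg x
  rw [abs_le]; constructor <;> nlinarith

end IsDensity

theorem isProbabilityMeasure_withDensity_ofReal_iff {f : α → ℝ} (hf : Measurable f)
    (h0 : ∀ x, 0 ≤ f x) :
    IsProbabilityMeasure (μ.withDensity fun x => ENNReal.ofReal (f x)) ↔ IsDensity μ f := by
  rw [isProbabilityMeasure_iff, withDensity_apply _ MeasurableSet.univ, Measure.restrict_univ]
  constructor
  · intro h
    refine ⟨hf, h0, ?_⟩
    rw [integral_eq_lintegral_of_nonneg_ae (Eventually.of_forall h0) hf.aestronglyMeasurable, h,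
      ENNReal.toReal_one]
  · intro hd
    rw [← ofReal_integral_eq_lintegral_ofReal hd.integrable (Eventually.of_forall h0),
      hd.integral_eq_one, ENNReal.ofReal_one]

section kernelOp

variable {κ : α → α → ℝ} {f g h : α → ℝ}

theorem kernelOp_congr_ae (hfg : f =ᵐ[μ] g) : kernelOp μ κ f = kernelOp μ κ g :=
  funext fun _ => integral_congr_ae (hfg.mono fun u hu => by simp only [hu])

theorem normalizedKernelOp_congr_ae (hfg : f =ᵐ[μ] g) :
    normalizedKernelOp μ κ f = normalizedKernelOp μ κ g := by
  unfold normalizedKernelOp; rw [kernelOp_congr_ae hfg]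

theorem kernelOp_smul (c : ℝ) : kernelOp μ κ (c • f) = c • kernelOp μ κ f := by
  ext x
  simp only [kernelOp, Pi.smul_apply, smul_eq_mul, mul_left_comm _ c, integral_const_mul]

variable {m : ℝ} (hκ : IsUniformlyPositiveKernel κ m)
include hκ

theorem IsUniformlyPositiveKernel.integrable_mul (hh : Integrable h μ) (x : α) :
    Integrable (fun u => κ x u * h u) μ :=
  hh.bdd_mul (hκ.measurable_uncurry.comp measurable_prodMk_left).aestronglyMeasurable
    (c := 1) (Eventually.of_forall fun u => by
      rw [Real.norm_eq_abs, abs_le]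
      exact ⟨by linarith [hκ.pos, hκ.le_apply x u], hκ.apply_le_one x u⟩)

theorem kernelOp_sub (hf : Integrable f μ) (hg : Integrable g μ) :
    kernelOp μ κ (f - g) = kernelOp μ κ f - kernelOp μ κ g := by
  ext x
  simp only [kernelOp, Pi.sub_apply, mul_sub]
  exact integral_sub (hκ.integrable_mul hf x) (hκ.integrable_mul hg x)

theorem measurable_kernelOp [SFinite μ] (hf : Measurable f) : Measurable (kernelOp μ κ f) :=
  (hκ.measurable_uncurry.mul (hf.comp measurable_snd)).stronglyMeasurable
    |>.integral_prod_right' |>.measurable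

theorem mul_integral_le_kernelOp (hh : Integrable h μ) (h0 : ∀ u, 0 ≤ h u) (x : α) :
    m * ∫ u, h u ∂μ ≤ kernelOp μ κ h x := by
  rw [← integral_const_mul]
  exact integral_mono (hh.const_mul m) (hκ.integrable_mul hh x)
    fun u => mul_le_mul_of_nonneg_right (hκ.le_apply x u) (h0 u)

theorem kernelOp_le_integral (hh : Integrable h μ) (h0 : ∀ u, 0 ≤ h u) (x : α) :
    kernelOp μ κ h x ≤ ∫ u, h u ∂μ :=
  integral_mono (hκ.integrable_mul hh x) hh
    fun u => mul_le_of_le_one_left (h0 u) (hκ.apply_le_one x u)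

theorem kernelOp_mem_Icc (hf : IsDensity μ f) (x : α) : kernelOp μ κ f x ∈ Icc m 1 := by
  have hlo := mul_integral_le_kernelOp hκ hf.integrable hf.nonneg x
  have hhi := kernelOp_le_integral hκ hf.integrable hf.nonneg x
  rw [hf.integral_eq_one] at hlo hhi
  exact ⟨by simpa using hlo, hhi⟩

theorem mul_integral_mul_kernelOp_le (hg : IsDensity μ g) (hh : Integrable h μ)
    (h0 : ∀ u, 0 ≤ h u) (x : α) : m * (∫ u, h u ∂μ) * kernelOp μ κ g x ≤ kernelOp μ κ h x :=
  (mul_le_of_le_one_right (mul_nonneg hκ.pos.le (integral_nonneg h0))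
    (kernelOp_mem_Icc hκ hg x).2).trans (mul_integral_le_kernelOp hκ hh h0 x)

theorem kernelOp_mem_Icc_smul {A B : ℝ} (hf : IsDensity μ f) (hg : IsDensity μ g)
    (hfg : f ∈ Icc (A • g) (B • g)) :
    kernelOp μ κ f ∈
      Icc ((A + m * (1 - A)) • kernelOp μ κ g) ((B - m * (B - 1)) • kernelOp μ κ g) := by
  have hlo : Integrable (f - A • g) μ := hf.integrable.sub (hg.integrable.smul A)
  have hhi : Integrable (B • g - f) μ := (hg.integrable.smul B).sub hf.integrable
  have key_lo := mul_integral_mul_kernelOp_le hκ hg hlo (fun u => sub_nonneg.2 (hfg.1 u))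
  have key_hi := mul_integral_mul_kernelOp_le hκ hg hhi (fun u => sub_nonneg.2 (hfg.2 u))
  have int_lo : ∫ u, (f - A • g) u ∂μ = 1 - A := by
    rw [integral_sub' hf.integrable (hg.integrable.smul A)]
    simp [integral_const_mul, hf.integral_eq_one, hg.integral_eq_one]
  have int_hi : ∫ u, (B • g - f) u ∂μ = B - 1 := by
    rw [integral_sub' (hg.integrable.smul B) hf.integrable]
    simp [integral_const_mul, hf.integral_eq_one, hg.integral_eq_one]
  rw [int_lo, kernelOp_sub hκ hf.integrable (hg.integrable.smul A), kernelOp_smul] at key_lo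
  rw [int_hi, kernelOp_sub hκ (hg.integrable.smul B) hf.integrable, kernelOp_smul] at key_hi
  refine ⟨fun x => ?_, fun x => ?_⟩
  · have := key_lo x
    simp only [Pi.sub_apply, Pi.smul_apply, smul_eq_mul] at this ⊢
    linarith
  · have := key_hi x
    simp only [Pi.sub_apply, Pi.smul_apply, smul_eq_mul] at this ⊢
    linarith

end kernelOp

section normalizedKernelOp

variable [IsProbabilityMeasure μ] {κ : α → α → ℝ} {m : ℝ} (hκ : IsUniformlyPositiveKernel κ m)
  {f g : α → ℝ}
include hκ

theorem integrable_kernelOp (hf : IsDensity μ f) : Integrable (kernelOp μ κ f) μ :=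
  .of_bound (measurable_kernelOp hκ hf.measurable).aestronglyMeasurable 1
    (Eventually.of_forall fun x => by
      obtain ⟨hlo, hhi⟩ := kernelOp_mem_Icc hκ hf x
      rw [Real.norm_eq_abs, abs_le]
      exact ⟨by linarith [hκ.pos], hhi⟩)

theorem integral_kernelOp_mem_Icc (hf : IsDensity μ f) :
    ∫ x, kernelOp μ κ f x ∂μ ∈ Icc m 1 := by
  constructor
  · simpa using integral_mono (integrable_const m) (integrable_kernelOp hκ hf)
      (fun x => (kernelOp_mem_Icc hκ hf x).1)
  · simpa using integral_mono (integrable_kernelOp hκ hf) (integrable_const 1)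
      (fun x => (kernelOp_mem_Icc hκ hf x).2)

theorem normalizedKernelOp_mem_Icc (hf : IsDensity μ f) (x : α) :
    normalizedKernelOp μ κ f x ∈ Icc m m⁻¹ := by
  obtain ⟨hK₀, hK₁⟩ := kernelOp_mem_Icc hκ hf x
  obtain ⟨hI₀, hI₁⟩ := integral_kernelOp_mem_Icc hκ hf
  have hI : 0 < ∫ x, kernelOp μ κ f x ∂μ := hκ.pos.trans_le hI₀
  refine ⟨(le_div_iff₀ hI).2 (by nlinarith [hκ.pos]), (div_le_iff₀ hI).2 ?_⟩
  calc kernelOp μ κ f x ≤ m⁻¹ * m := by rw [inv_mul_cancel₀ hκ.pos.ne']; exact hK₁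
    _ ≤ m⁻¹ * ∫ x, kernelOp μ κ f x ∂μ := by gcongr; exact inv_nonneg.2 hκ.pos.le

theorem isDensity_normalizedKernelOp (hf : IsDensity μ f) :
    IsDensity μ (normalizedKernelOp μ κ f) where
  measurable := (measurable_kernelOp hκ hf.measurable).div_const _
  nonneg x := hκ.pos.le.trans (normalizedKernelOp_mem_Icc hκ hf x).1
  integral_eq_one := by
    simp only [normalizedKernelOp]
    rw [integral_div,
      div_self (hκ.pos.trans_le (integral_kernelOp_mem_Icc hκ hf).1).ne']

theorem isDensity_iterate_normalizedKernelOp (hf : IsDensity μ f) (n : ℕ) :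
    IsDensity μ ((normalizedKernelOp μ κ)^[n] f) := by
  induction n with
  | zero => exact hf
  | succ n ih => rw [iterate_succ_apply']; exact isDensity_normalizedKernelOp hκ ih

theorem normalizedKernelOp_mem_Icc_smul (hf : IsDensity μ f) (hg : IsDensity μ g) :
    normalizedKernelOp μ κ f ∈
      Icc ((m ^ 2) • normalizedKernelOp μ κ g) ((m ^ 2)⁻¹ • normalizedKernelOp μ κ g) := by
  have hm := hκ.pos
  refine ⟨fun x => ?_, fun x => ?_⟩ <;>
    obtain ⟨hf₀, hf₁⟩ := normalizedKernelOp_mem_Icc hκ hf x <;>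
    obtain ⟨hg₀, hg₁⟩ := normalizedKernelOp_mem_Icc hκ hg x <;>
    simp only [Pi.smul_apply, smul_eq_mul]
  · calc m ^ 2 * normalizedKernelOp μ κ g x ≤ m ^ 2 * m⁻¹ := by gcongr
      _ = m := by field_simp
      _ ≤ _ := hf₀
  · calc normalizedKernelOp μ κ f x ≤ m⁻¹ := hf₁
      _ = (m ^ 2)⁻¹ * m := by field_simp
      _ ≤ _ := by gcongr

theorem exists_mem_Icc_smul_normalizedKernelOp {A B : ℝ} (hf : IsDensity μ f)
    (hg : IsDensity μ g) (hA : 0 < A) (hfg : f ∈ Icc (A • g) (B • g)) :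
    ∃ A' B', 0 < A' ∧
      normalizedKernelOp μ κ f ∈
        Icc (A' • normalizedKernelOp μ κ g) (B' • normalizedKernelOp μ κ g) ∧
      B' / A' - 1 ≤ (1 - m) * (B / A - 1) := by
  have hA1 := hf.le_one_of_smul_le hg hfg.1
  have hB1 := hf.one_le_of_le_smul hg hfg.2
  have := nonempty_of_isProbabilityMeasure μ
  have hm1 := hκ.le_one
  set If := ∫ x, kernelOp μ κ f x ∂μ
  set Ig := ∫ x, kernelOp μ κ g x ∂μ
  have hIf : 0 < If := hκ.pos.trans_le (integral_kernelOp_mem_Icc hκ hf).1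
  have hIg : 0 < Ig := hκ.pos.trans_le (integral_kernelOp_mem_Icc hκ hg).1
  set A₁ := A + m * (1 - A)
  have hA₁ : A ≤ A₁ := le_add_of_nonneg_right (mul_nonneg hκ.pos.le (by linarith))
  have hA₁0 : 0 < A₁ := hA.trans_le hA₁
  obtain ⟨hlo, hhi⟩ := kernelOp_mem_Icc_smul hκ hf hg hfg
  refine ⟨A₁ * (Ig / If), (B - m * (B - 1)) * (Ig / If), by positivity,
    ⟨fun x => ?_, fun x => ?_⟩, ?_⟩
  · have := hlo x
    simp only [Pi.smul_apply, smul_eq_mul, normalizedKernelOp] at this ⊢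
    rw [show A₁ * (Ig / If) * (kernelOp μ κ g x / Ig) = A₁ * kernelOp μ κ g x / If by
      field_simp]
    gcongr
  · have := hhi x
    simp only [Pi.smul_apply, smul_eq_mul, normalizedKernelOp] at this ⊢
    rw [show (B - m * (B - 1)) * (Ig / If) * (kernelOp μ κ g x / Ig) =
      (B - m * (B - 1)) * kernelOp μ κ g x / If by field_simp]
    gcongr
  · rw [mul_div_mul_right _ _ (div_pos hIg hIf).ne']
    calc (B - m * (B - 1)) / A₁ - 1 = (1 - m) * (B - A) / A₁ := by field_simp; ring
      _ ≤ (1 - m) * (B - A) / A := by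
        gcongr
        exact mul_nonneg (by linarith) (by linarith)
      _ = (1 - m) * (B / A - 1) := by field_simp

theorem exists_mem_Icc_smul_iterate_normalizedKernelOp (hf : IsDensity μ f)
    (hg : IsDensity μ g) (n : ℕ) :
    ∃ A B, 0 < A ∧
      (normalizedKernelOp μ κ)^[n + 1] f ∈
        Icc (A • (normalizedKernelOp μ κ)^[n + 1] g) (B • (normalizedKernelOp μ κ)^[n + 1] g) ∧
      B / A - 1 ≤ (1 - m) ^ n * ((m ^ 2)⁻¹ / m ^ 2 - 1) := by
  induction n with
  | zero =>
    exact ⟨m ^ 2, (m ^ 2)⁻¹, pow_pos hκ.pos 2, normalizedKernelOp_mem_Icc_smul hκ hf hg,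
      by rw [pow_zero, one_mul]⟩
  | succ n ih =>
    obtain ⟨A, B, hA, hfg, hgap⟩ := ih
    obtain ⟨A', B', hA', hfg', hgap'⟩ := exists_mem_Icc_smul_normalizedKernelOp hκ
      (isDensity_iterate_normalizedKernelOp hκ hf _)
      (isDensity_iterate_normalizedKernelOp hκ hg _) hA hfg
    refine ⟨A', B', hA', by simpa only [iterate_succ_apply'] using hfg', ?_⟩
    have := nonempty_of_isProbabilityMeasure μ
    have hm1 : 0 ≤ 1 - m := sub_nonneg.2 hκ.le_one
    calc B' / A' - 1 ≤ (1 - m) * (B / A - 1) := hgap'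
      _ ≤ (1 - m) * ((1 - m) ^ n * ((m ^ 2)⁻¹ / m ^ 2 - 1)) := by gcongr
      _ = _ := by ring

theorem exists_abs_iterate_normalizedKernelOp_sub_le :
    ∃ C, ∀ f g, IsDensity μ f → IsDensity μ g → ∀ n x,
      |(normalizedKernelOp μ κ)^[n + 1] f x - (normalizedKernelOp μ κ)^[n + 1] g x| ≤
        C * (1 - m) ^ n := by
  refine ⟨m⁻¹ * ((m ^ 2)⁻¹ / m ^ 2 - 1), fun f g hf hg n x => ?_⟩
  obtain ⟨A, B, hA, hfg, hgap⟩ := exists_mem_Icc_smul_iterate_normalizedKernelOp hκ hf hg n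
  have hfn := isDensity_iterate_normalizedKernelOp hκ hf (n + 1)
  have hgn := isDensity_iterate_normalizedKernelOp hκ hg (n + 1)
  have hgap0 : 0 ≤ B / A - 1 := by
    rw [sub_nonneg, le_div_iff₀ hA, one_mul]
    exact (hfn.le_one_of_smul_le hgn hfg.1).trans (hfn.one_le_of_le_smul hgn hfg.2)
  have hgx : (normalizedKernelOp μ κ)^[n + 1] g x ≤ m⁻¹ := by
    rw [iterate_succ_apply']
    exact (normalizedKernelOp_mem_Icc hκ (isDensity_iterate_normalizedKernelOp hκ hg n) x).2
  calc _ ≤ (B / A - 1) * (normalizedKernelOp μ κ)^[n + 1] g x :=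
        hfn.abs_sub_le_of_mem_Icc_smul hgn hA hfg x
    _ ≤ (1 - m) ^ n * ((m ^ 2)⁻¹ / m ^ 2 - 1) * m⁻¹ :=
      mul_le_mul hgap hgx (hgn.nonneg x) (hgap0.trans hgap)
    _ = _ := by ring

end normalizedKernelOp

section fixedPoint

variable [IsProbabilityMeasure μ] {κ : α → α → ℝ} {m : ℝ} (hκ : IsUniformlyPositiveKernel κ m)
  {f p q : α → ℝ}
include hκ

theorem tendsto_normalizedKernelOp {F : ℕ → α → ℝ} {C : ℝ} (hF : ∀ n, IsDensity μ (F n))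
    (hFC : ∀ n u, F n u ≤ C) (hf : IsDensity μ f)
    (hlim : ∀ u, Tendsto (F · u) atTop (𝓝 (f u))) (x : α) :
    Tendsto (fun n => normalizedKernelOp μ κ (F n) x) atTop (𝓝 (normalizedKernelOp μ κ f x)) := by
  have hK : ∀ y, Tendsto (fun n => kernelOp μ κ (F n) y) atTop (𝓝 (kernelOp μ κ f y)) :=
    fun y => tendsto_integral_of_dominated_convergence (fun _ => C)
      (fun n => (hκ.integrable_mul (hF n).integrable y).aestronglyMeasurable) (integrable_const C)
      (fun n => Eventually.of_forall fun u => by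
        rw [Real.norm_eq_abs, abs_of_nonneg (mul_nonneg (hκ.pos.le.trans (hκ.le_apply y u))
          ((hF n).nonneg u))]
        exact (mul_le_of_le_one_left ((hF n).nonneg u) (hκ.apply_le_one y u)).trans (hFC n u))
      (Eventually.of_forall fun u => (hlim u).const_mul _)
  have hI : Tendsto (fun n => ∫ y, kernelOp μ κ (F n) y ∂μ) atTop
      (𝓝 (∫ y, kernelOp μ κ f y ∂μ)) :=
    tendsto_integral_of_dominated_convergence (fun _ => 1)
      (fun n => (integrable_kernelOp hκ (hF n)).aestronglyMeasurable) (integrable_const 1)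
      (fun n => Eventually.of_forall fun y => by
        obtain ⟨hlo, hhi⟩ := kernelOp_mem_Icc hκ (hF n) y
        rw [Real.norm_eq_abs, abs_of_nonneg (hκ.pos.le.trans hlo)]
        exact hhi)
      (Eventually.of_forall hK)
  exact (hK x).div hI (hκ.pos.trans_le (integral_kernelOp_mem_Icc hκ hf).1).ne'

theorem exists_isDensity_isFixedPt_normalizedKernelOp :
    ∃ p, IsDensity μ p ∧ IsFixedPt (normalizedKernelOp μ κ) p := by
  set T := normalizedKernelOp μ κ
  obtain ⟨C, hC⟩ := exists_abs_iterate_normalizedKernelOp_sub_le (μ := μ) hκ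
  set F : ℕ → α → ℝ := fun n => T^[n + 1] fun _ => 1
  have hF n : IsDensity μ (F n) := isDensity_iterate_normalizedKernelOp hκ .one (n + 1)
  have hFle n u : F n u ≤ m⁻¹ := by
    simp only [F, iterate_succ_apply']
    exact (normalizedKernelOp_mem_Icc hκ (isDensity_iterate_normalizedKernelOp hκ .one n) u).2
  have hcauchy u : CauchySeq (F · u) :=
    cauchySeq_of_le_geometric (1 - m) C (by linarith [hκ.pos]) fun n => by
      rw [Real.dist_eq]
      simpa only [F, iterate_succ_apply] using hC _ _ .one (isDensity_normalizedKernelOp hκ .one) n u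
  choose p hp using fun u => cauchySeq_tendsto_of_complete (hcauchy u)
  have hpd : IsDensity μ p := by
    refine ⟨measurable_of_tendsto_metrizable (fun n => (hF n).measurable) (tendsto_pi_nhds.2 hp),
      fun u => ge_of_tendsto' (hp u) fun n => (hF n).nonneg u,
      tendsto_nhds_unique (tendsto_integral_of_dominated_convergence (fun _ => m⁻¹)
        (fun n => (hF n).measurable.aestronglyMeasurable) (integrable_const _)
        (fun n => Eventually.of_forall fun u => ?_) (Eventually.of_forall hp)) ?_⟩
    · rw [Real.norm_eq_abs, abs_of_nonneg ((hF n).nonneg u)]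
      exact hFle n u
    · simp only [(hF _).integral_eq_one, tendsto_const_nhds]
  refine ⟨p, hpd, funext fun x => tendsto_nhds_unique
    (tendsto_normalizedKernelOp hκ hF hFle hpd hp x) ?_⟩
  exact ((hp x).comp (tendsto_add_atTop_nat 1)).congr fun n =>
    congrFun (iterate_succ_apply' T (n + 1) _) x

theorem IsDensity.eq_of_isFixedPt (hp : IsDensity μ p) (hq : IsDensity μ q)
    (hTp : IsFixedPt (normalizedKernelOp μ κ) p) (hTq : IsFixedPt (normalizedKernelOp μ κ) q) :
    p = q := by
  have := nonempty_of_isProbabilityMeasure μ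
  obtain ⟨C, hC⟩ := exists_abs_iterate_normalizedKernelOp_sub_le (μ := μ) hκ
  funext x
  have hbound n : |p x - q x| ≤ C * (1 - m) ^ n := by
    simpa only [(hTp.iterate (n + 1)).eq, (hTq.iterate (n + 1)).eq] using hC p q hp hq n x
  have hlim : Tendsto (fun n => C * (1 - m) ^ n) atTop (𝓝 0) := by
    simpa using (tendsto_pow_atTop_nhds_zero_of_lt_one (sub_nonneg.2 hκ.le_one)
      (by linarith [hκ.pos])).const_mul C
  exact sub_eq_zero.1 (abs_nonpos_iff.1 (ge_of_tendsto' hlim hbound))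

theorem ae_eq_normalizedKernelOp_of_ae_eq_mul_kernelOp (hf : IsDensity μ f) {c : ℝ}
    (hfc : f =ᵐ[μ] fun x => c * kernelOp μ κ f x) : f =ᵐ[μ] normalizedKernelOp μ κ f := by
  have hI : 0 < ∫ x, kernelOp μ κ f x ∂μ := hκ.pos.trans_le (integral_kernelOp_mem_Icc hκ hf).1
  have hc : c * ∫ x, kernelOp μ κ f x ∂μ = 1 := by
    rw [← integral_const_mul, ← integral_congr_ae hfc, hf.integral_eq_one]
  refine hfc.trans (Eventually.of_forall fun x => ?_)
  simp only [normalizedKernelOp]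
  rw [eq_div_iff hI.ne', mul_right_comm, hc, one_mul]

theorem IsDensity.ae_eq_of_isFixedPt (hf : IsDensity μ f) (hp : IsDensity μ p)
    (hTp : IsFixedPt (normalizedKernelOp μ κ) p) (hfT : f =ᵐ[μ] normalizedKernelOp μ κ f) :
    f =ᵐ[μ] p :=
  hfT.trans <| .of_eq <| (isDensity_normalizedKernelOp hκ hf).eq_of_isFixedPt hκ hp
    (normalizedKernelOp_congr_ae hfT.symm) hTp

end fixedPoint

theorem exists_isUniformlyPositiveKernel_eqOn {κ : α → α → ℝ} {s : Set α} (hs : s.Nonempty)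
    (hκ : Measurable (uncurry κ)) (hrange : ∀ a ∈ s, ∀ b ∈ s, κ a b ∈ Icc (0:ℝ) 1)
    (hinf : 0 < sInf (image2 κ s s)) :
    ∃ κ' m, IsUniformlyPositiveKernel κ' m ∧ ∀ x ∈ s, ∀ u ∈ s, κ' x u = κ x u := by
  set m := sInf (image2 κ s s)
  have hm : ∀ a ∈ s, ∀ b ∈ s, m ≤ κ a b := fun a ha b hb =>
    csInf_le ⟨0, by rintro _ ⟨a, ha, b, hb, rfl⟩; exact (hrange a ha b hb).1⟩
      (mem_image2_of_mem ha hb)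
  obtain ⟨a, ha⟩ := hs
  refine ⟨fun x u => max m (min (κ x u) 1), m,
    ⟨measurable_const.max (hκ.min measurable_const), hinf, fun _ _ => le_max_left _ _,
      fun _ _ => max_le ((hm a ha a ha).trans (hrange a ha a ha).2) (min_le_right _ _)⟩,
    fun x hx u hu => ?_⟩
  simp only [min_eq_left (hrange x hx u hu).2, max_eq_right (hm x hx u hu)]

theorem kernelOp_restrict_eq_setIntegral {s : Set α} (hs : MeasurableSet s) {κ κ' : α → α → ℝ}
    {f : α → ℝ} {x : α} (h : ∀ u ∈ s, κ' x u = κ x u) :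
    kernelOp (μ.restrict s) κ' f x = ∫ u in s, κ x u * f u ∂μ :=
  setIntegral_congr_fun hs fun u hu => by simp only [h u hu]

theorem malthusian_eigenmeasure_general
    (lam : ℝ) (hlam : 0 < lam)
    (κ : ℝ → ℝ → ℝ) (hκmeas : Measurable (Function.uncurry κ))
    (hκrange : ∀ a ∈ Set.Icc (0:ℝ) 1, ∀ b ∈ Set.Icc (0:ℝ) 1, κ a b ∈ Set.Icc (0:ℝ) 1)
    (hκinf : 0 < sInf (Set.image2 κ (Set.Icc (0:ℝ) 1) (Set.Icc (0:ℝ) 1))) :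
    ∃ αs : ℝ, -1 < αs ∧
      ∃! π : Measure ℝ, IsProbabilityMeasure π ∧
        ∃ p : ℝ → ℝ, Measurable p ∧ (∀ y, 0 ≤ p y) ∧
          π = (volume.restrict (Set.Icc (0:ℝ) 1)).withDensity
            (fun y => ENNReal.ofReal (p y)) ∧
          ∀ᵐ x ∂(volume.restrict (Set.Icc (0:ℝ) 1)),
            p x = lam / (1 + αs) * ∫ u in Set.Icc (0:ℝ) 1, κ x u * p u := by
  set I := Set.Icc (0:ℝ) 1
  have : IsProbabilityMeasure (volume.restrict I) := ⟨by simp [I]⟩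
  obtain ⟨κ', m, hκ', hκκ'⟩ :=
    exists_isUniformlyPositiveKernel_eqOn ⟨0, left_mem_Icc.2 zero_le_one⟩ hκmeas hκrange hκinf
  have hK f : ∀ᵐ x ∂volume.restrict I, kernelOp (volume.restrict I) κ' f x =
      ∫ u in I, κ x u * f u := (ae_restrict_mem measurableSet_Icc).mono fun x hx =>
    kernelOp_restrict_eq_setIntegral measurableSet_Icc (hκκ' x hx)
  obtain ⟨p, hp, hTp⟩ := exists_isDensity_isFixedPt_normalizedKernelOp (μ := volume.restrict I) hκ'
  set Λ := ∫ x, kernelOp (volume.restrict I) κ' p x ∂volume.restrict I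
  have hΛ : 0 < Λ := hκ'.pos.trans_le (integral_kernelOp_mem_Icc hκ' hp).1
  have hcoef : lam / (1 + (lam * Λ - 1)) = Λ⁻¹ := by field_simp; ring
  refine ⟨lam * Λ - 1, by linarith [mul_pos hlam hΛ], _,
    ⟨(isProbabilityMeasure_withDensity_ofReal_iff hp.measurable hp.nonneg).2 hp,
      p, hp.measurable, hp.nonneg, rfl, ?_⟩, ?_⟩
  · filter_upwards [hK p] with x hx
    rw [hcoef, ← hx, ← div_eq_inv_mul]
    exact (congrFun hTp x).symm
  · rintro _ ⟨hπ, q, hqm, hq0, rfl, hq⟩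
    have hqd := (isProbabilityMeasure_withDensity_ofReal_iff hqm hq0).1 hπ
    have hqK : q =ᵐ[volume.restrict I] fun x => Λ⁻¹ * kernelOp (volume.restrict I) κ' q x := by
      filter_upwards [hq, hK q] with x hx hKx
      rw [hx, hKx, hcoef]
    exact withDensity_congr_ae <| (hqd.ae_eq_of_isFixedPt hκ' hp hTp
      (ae_eq_normalizedKernelOp_of_ae_eq_mul_kernelOp hκ' hqd hqK)).fun_comp ENNReal.ofReal

/-- for `λ > 0` and a standard kernel `κ` bounded below by a positive
constant on `[0,1]²`, there exist a Malthusian parameter `α* > -1` and a unique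
probability measure `π` on `[0,1]`, absolutely continuous with respect to Lebesgue
measure, whose density `p` satisfies
`p(x) = (λ/(1+α*)) ∫_0^1 κ(x,u) p(u) du` for almost every `x ∈ [0,1]`. -/
theorem malthusian_eigenmeasure
    (lam : ℝ) (hlam : 0 < lam)
    (κ : ℝ → ℝ → ℝ) (hκmeas : Measurable (Function.uncurry κ))
    (hκsymm : ∀ a ∈ Set.Icc (0:ℝ) 1, ∀ b ∈ Set.Icc (0:ℝ) 1, κ a b = κ b a)
    (hκrange : ∀ a ∈ Set.Icc (0:ℝ) 1, ∀ b ∈ Set.Icc (0:ℝ) 1, κ a b ∈ Set.Icc (0:ℝ) 1)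
    (hκinf : 0 < sInf (Set.image2 κ (Set.Icc (0:ℝ) 1) (Set.Icc (0:ℝ) 1))) :
    ∃ αs : ℝ, -1 < αs ∧
      ∃! π : Measure ℝ, IsProbabilityMeasure π ∧
        ∃ p : ℝ → ℝ, Measurable p ∧ (∀ y, 0 ≤ p y) ∧
          π = (volume.restrict (Set.Icc (0:ℝ) 1)).withDensity
            (fun y => ENNReal.ofReal (p y)) ∧
          ∀ᵐ x ∂(volume.restrict (Set.Icc (0:ℝ) 1)),
            p x = lam / (1 + αs) * ∫ u in Set.Icc (0:ℝ) 1, κ x u * p u :=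
  malthusian_eigenmeasure_general lam hlam κ hκmeas hκrange hκinf
end

section
/- Let 0 < α, β, γ, δ < 1 and let κ be the step standard kernel taking value α on [0,γ]², value β on (γ,1]², and value δ otherwise. Let π be the probability measure on [0,1] with density dπ/dx = (∫_0^1 κ(x,v) dv)/(∫_0^1 ∫_0^1 κ(u,v) du dv) (the invariant measure of the one-referral Markov chain sampling), and set τ_M(γ) := π([0,γ]). Then τ_M(γ) = ((αγ − δγ + δ)γ) / (αγ² − 2δγ² + βγ² + 2δγ − 2βγ + β). -/
/-! The row integral `x ↦ ∫ κ(x,v) dv` is constant on `[0,γ]`, equal to `A = αγ + δ(1-γ)`,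
and on `(γ,1]`, equal to `B = δγ + β(1-γ)`. So the total mass is `D = Aγ + B(1-γ)`, `π` has the
constant density `A / D` on `[0,γ]`, and `π([0,γ]) = Aγ / D`, which expands to the stated
rational function. -/

open MeasureTheory Filter
open scoped ENNReal Classical

noncomputable section

/-- The step kernel: value `α` on `[0,γ]²`, value `β` on `(γ,1]²`, and `δ` otherwise. -/
def stepKer (α β γ δ : ℝ) (x y : ℝ) : ℝ :=
  if x ≤ γ ∧ y ≤ γ then α else if γ < x ∧ γ < y then β else δ

theorem setIntegral_Icc_zero_one_ite_le (a b : ℝ) {γ : ℝ}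
    (hγ₀ : 0 ≤ γ) (hγ₁ : γ ≤ 1) :
    ∫ v in Set.Icc (0:ℝ) 1, (if v ≤ γ then a else b) = a * γ + b * (1 - γ) := by
  have hleft : Set.EqOn (fun v : ℝ => if v ≤ γ then a else b) (fun _ => a) (Set.Icc 0 γ) :=
    fun v hv => if_pos hv.2
  have hright : Set.EqOn (fun v : ℝ => if v ≤ γ then a else b) (fun _ => b) (Set.Ioc γ 1) :=
    fun v hv => if_neg (not_le.2 hv.1)
  have hint_left : IntegrableOn (fun v : ℝ => if v ≤ γ then a else b) (Set.Icc 0 γ) :=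
    (integrableOn_const measure_Icc_lt_top.ne).congr_fun hleft.symm measurableSet_Icc
  have hint_right : IntegrableOn (fun v : ℝ => if v ≤ γ then a else b) (Set.Ioc γ 1) :=
    (integrableOn_const measure_Ioc_lt_top.ne).congr_fun hright.symm measurableSet_Ioc
  rw [← Set.Icc_union_Ioc_eq_Icc hγ₀ hγ₁,
    setIntegral_union
      ((Set.Iic_disjoint_Ioi le_rfl).mono Set.Icc_subset_Iic_self Set.Ioc_subset_Ioi_self)
      measurableSet_Ioc hint_left hint_right,
    setIntegral_congr_fun measurableSet_Icc hleft, setIntegral_congr_fun measurableSet_Ioc hright]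
  simp [hγ₀, hγ₁, mul_comm]

theorem stepKer_eq_ite (α β γ δ x v : ℝ) :
    stepKer α β γ δ x v =
      if v ≤ γ then (if x ≤ γ then α else δ) else (if x ≤ γ then δ else β) := by
  unfold stepKer
  by_cases hx : x ≤ γ <;> by_cases hv : v ≤ γ <;> simp [hx, hv, not_le.1, not_lt.2]

theorem setIntegral_stepKer (α β δ x : ℝ) {γ : ℝ} (hγ₀ : 0 ≤ γ) (hγ₁ : γ ≤ 1) :
    ∫ v in Set.Icc (0:ℝ) 1, stepKer α β γ δ x v =
      if x ≤ γ then α * γ + δ * (1 - γ) else δ * γ + β * (1 - γ) := by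
  simp_rw [stepKer_eq_ite]
  split_ifs <;> exact setIntegral_Icc_zero_one_ite_le _ _ hγ₀ hγ₁

theorem withDensity_restrict_Icc_zero_one_Icc_toReal {f : ℝ → ℝ} {c γ : ℝ} (hc : 0 ≤ c)
    (hγ₀ : 0 ≤ γ) (hγ₁ : γ ≤ 1) (hf : Set.EqOn f (fun _ => c) (Set.Icc 0 γ)) :
    (((volume.restrict (Set.Icc (0:ℝ) 1)).withDensity fun x => ENNReal.ofReal (f x))
      (Set.Icc 0 γ)).toReal = c * γ := by
  rw [withDensity_apply _ measurableSet_Icc, Measure.restrict_restrict measurableSet_Icc,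
    Set.inter_eq_left.2 (Set.Icc_subset_Icc_right hγ₁),
    setLIntegral_congr_fun measurableSet_Icc (fun x hx => congrArg ENNReal.ofReal (hf hx)),
    setLIntegral_const, Real.volume_Icc, ENNReal.toReal_mul, ENNReal.toReal_ofReal hc,
    ENNReal.toReal_ofReal (by simpa using hγ₀), sub_zero]

/-- for the step kernel with parameters `0 < α, β, γ, δ < 1`, the invariant
measure `π` of the one-referral Markov chain, with density
`(∫_0^1 κ(x,v) dv)/(∫_0^1 ∫_0^1 κ(u,v) du dv)`, satisfies
`τ_M(γ) = π([0,γ]) = ((αγ - δγ + δ)γ) / (αγ² - 2δγ² + βγ² + 2δγ - 2βγ + β)`. -/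
theorem tauM_formula (α β γ δ : ℝ)
    (hα : α ∈ Set.Ioo (0:ℝ) 1) (hβ : β ∈ Set.Ioo (0:ℝ) 1)
    (hγ : γ ∈ Set.Ioo (0:ℝ) 1) (hδ : δ ∈ Set.Ioo (0:ℝ) 1) :
    (((volume.restrict (Set.Icc (0:ℝ) 1)).withDensity fun x =>
        ENNReal.ofReal ((∫ v in Set.Icc (0:ℝ) 1, stepKer α β γ δ x v) /
          ∫ u in Set.Icc (0:ℝ) 1, ∫ v in Set.Icc (0:ℝ) 1, stepKer α β γ δ u v))
      (Set.Icc (0:ℝ) γ)).toReal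
      = ((α * γ - δ * γ + δ) * γ) /
        (α * γ ^ 2 - 2 * δ * γ ^ 2 + β * γ ^ 2 + 2 * δ * γ - 2 * β * γ + β) := by
  obtain ⟨hγ₀, hγ₁⟩ := hγ
  set A := α * γ + δ * (1 - γ)
  set B := δ * γ + β * (1 - γ)
  have hrow := fun x => setIntegral_stepKer α β δ x hγ₀.le hγ₁.le
  have htotal : ∫ u in Set.Icc (0:ℝ) 1, ∫ v in Set.Icc (0:ℝ) 1, stepKer α β γ δ u v =
      A * γ + B * (1 - γ) := by
    simp_rw [hrow]
    exact setIntegral_Icc_zero_one_ite_le A B hγ₀.le hγ₁.le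
  have hA : 0 < A := add_pos (mul_pos hα.1 hγ₀) (mul_pos hδ.1 (sub_pos.2 hγ₁))
  have hB : 0 < B := add_pos (mul_pos hδ.1 hγ₀) (mul_pos hβ.1 (sub_pos.2 hγ₁))
  have hD : 0 < A * γ + B * (1 - γ) := add_pos (mul_pos hA hγ₀) (mul_pos hB (sub_pos.2 hγ₁))
  rw [withDensity_restrict_Icc_zero_one_Icc_toReal (div_pos hA hD).le hγ₀.le hγ₁.le
      (fun x hx => by rw [htotal, hrow, if_pos hx.2]),
    div_mul_eq_mul_div]
  congr 1 <;> ring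
end
end

section
/- Let 0 < α, β, γ, δ < 1 and let κ be the step standard kernel taking value α on [0,γ]², value β on (γ,1]², and value δ otherwise. Let λ > 0, and let π be a probability measure on [0,1] with density ν satisfying ν(x) = (λ/(1+α*)) ∫_0^1 κ(x,y) ν(y) dy for the Malthusian parameter α*, i.e. ν is the (normalised) positive eigenfunction of the integral operator with kernel κ corresponding to its largest eigenvalue. Set τ_P(γ) := π([0,γ]). Then τ_P(γ) = ((α+β)γ − β + s) / (2δ + γ(α − 2δ + β) − β + s), where s = sqrt( γ²((α+β)² − 4δ²) + 2γ(2δ² − αβ − β²) + β² ). -/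
open MeasureTheory Filter
open scoped ENNReal Classical

noncomputable section

/-!
The eigen-equation forces `ν` to be constant, say `a` on `[0,γ]` and `b` on `(γ,1]`, and turns
into the `2 × 2` system `a = c (γ α a + (1-γ) δ b)`, `b = c (γ δ a + (1-γ) β b)` together with
the normalisation `γ a + (1-γ) b = 1`. Eliminating `c` and `b` leaves a quadratic equation for
`T = γ a = π([0,γ])` which is negative at `0` and positive at `1`, so it has a unique root in
`(0,1)`; the stated closed form is a root in `(0,1)`, hence equals `T`.
-/

open Set

lemma eq_of_quadratic_eq_zero_of_mem_Ioo {A B C u v : ℝ} (hu : u ∈ Ioo (0 : ℝ) 1)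
    (hv : v ∈ Ioo (0 : ℝ) 1) (hpu : A * u ^ 2 + B * u + C = 0) (hpv : A * v ^ 2 + B * v + C = 0)
    (hC : C < 0) (hABC : 0 < A + B + C) : u = v := by
  obtain ⟨hu0, hu1⟩ := hu
  obtain ⟨hv0, hv1⟩ := hv
  by_contra huv
  have hB : A * (u + v) + B = 0 := by
    refine (mul_eq_zero.1 ?_).resolve_left (sub_ne_zero.2 huv)
    linear_combination hpu - hpv
  have hCA : C = A * (u * v) := by linear_combination hpu - u * hB
  have hA : A < 0 := by
    rcases lt_trichotomy A 0 with hA | rfl | hA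
    · exact hA
    · linarith
    · nlinarith [mul_pos hu0 hv0]
  nlinarith [mul_pos (sub_pos.2 hu1) (sub_pos.2 hv1)]

lemma quadratic_div_eq {K : Type*} [Field K] {A B C N D : K} (hD : D ≠ 0) :
    A * (N / D) ^ 2 + B * (N / D) + C = (A * N ^ 2 + B * N * D + C * D ^ 2) / D ^ 2 := by
  field_simp

section PiecewiseConstant

variable {f : ℝ → ℝ} {a b c k₁ k₂ : ℝ}

lemma setIntegral_Icc_of_eqOn_Icc_Ioc (hab : a ≤ b) (hbc : b ≤ c)
    (h₁ : EqOn f (fun _ => k₁) (Icc a b)) (h₂ : EqOn f (fun _ => k₂) (Ioc b c)) :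
    ∫ y in Icc a c, f y = (b - a) * k₁ + (c - b) * k₂ := by
  have hi₁ : IntegrableOn f (Icc a b) :=
    (integrableOn_const (by simp)).congr_fun h₁.symm measurableSet_Icc
  have hi₂ : IntegrableOn f (Ioc b c) :=
    (integrableOn_const (by simp)).congr_fun h₂.symm measurableSet_Ioc
  rw [← Icc_union_Ioc_eq_Icc hab hbc,
    setIntegral_union ((Iic_disjoint_Ioc le_rfl).mono_left Icc_subset_Iic_self)
      measurableSet_Ioc hi₁ hi₂,
    setIntegral_congr_fun measurableSet_Icc h₁, setIntegral_congr_fun measurableSet_Ioc h₂,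
    setIntegral_const, setIntegral_const, Real.volume_real_Icc_of_le hab,
    Real.volume_real_Ioc_of_le hbc, smul_eq_mul, smul_eq_mul]

lemma setIntegral_Icc_ite_mul (hab : a ≤ b) (hbc : b ≤ c)
    (h₁ : EqOn f (fun _ => k₁) (Icc a b)) (h₂ : EqOn f (fun _ => k₂) (Ioc b c)) (p q : ℝ) :
    ∫ y in Icc a c, (if y ≤ b then p else q) * f y = (b - a) * (p * k₁) + (c - b) * (q * k₂) :=
  setIntegral_Icc_of_eqOn_Icc_Ioc hab hbc
    (fun y hy => by simp [hy.2, h₁ hy]) (fun y hy => by simp [not_le.2 hy.1, h₂ hy])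

end PiecewiseConstant

lemma withDensity_apply_of_eqOn {X : Type*} [MeasurableSpace X] {μ : Measure X}
    {f : X → ℝ≥0∞} {k : ℝ≥0∞} {s : Set X} (hs : MeasurableSet s) (h : EqOn f (fun _ => k) s) :
    μ.withDensity f s = k * μ s := by
  rw [withDensity_apply _ hs, setLIntegral_congr_fun hs h, setLIntegral_const]

section TwoStepDensity

variable {ν : ℝ → ℝ} {γ a b : ℝ} (ha : 0 ≤ a) (hνa : EqOn ν (fun _ => a) (Icc 0 γ))
include ha hνa

lemma withDensity_ofReal_apply_Icc_of_eqOn :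
    volume.withDensity (fun y => ENNReal.ofReal (ν y)) (Icc 0 γ) = ENNReal.ofReal (γ * a) := by
  rw [withDensity_apply_of_eqOn measurableSet_Icc (fun y hy => by rw [hνa hy]),
    Real.volume_Icc, sub_zero, ← ENNReal.ofReal_mul ha, mul_comm]

lemma withDensity_ofReal_restrict_Icc_apply_Icc (hγ1 : γ ≤ 1) :
    (volume.restrict (Icc 0 1)).withDensity (fun y => ENNReal.ofReal (ν y)) (Icc 0 γ)
      = ENNReal.ofReal (γ * a) := by
  rw [← restrict_withDensity measurableSet_Icc, Measure.restrict_apply measurableSet_Icc,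
    inter_eq_left.2 (Icc_subset_Icc_right hγ1),
    withDensity_ofReal_apply_Icc_of_eqOn ha hνa]

lemma withDensity_ofReal_restrict_Icc_apply_univ (hγ0 : 0 ≤ γ) (hγ1 : γ ≤ 1) (hb : 0 ≤ b)
    (hνb : EqOn ν (fun _ => b) (Ioc γ 1)) :
    (volume.restrict (Icc 0 1)).withDensity (fun y => ENNReal.ofReal (ν y)) univ
      = ENNReal.ofReal (γ * a + (1 - γ) * b) := by
  rw [← restrict_withDensity measurableSet_Icc, Measure.restrict_apply_univ,
    ← Icc_union_Ioc_eq_Icc hγ0 hγ1,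
    measure_union ((Iic_disjoint_Ioc le_rfl).mono_left Icc_subset_Iic_self) measurableSet_Ioc,
    withDensity_ofReal_apply_Icc_of_eqOn ha hνa,
    withDensity_apply_of_eqOn measurableSet_Ioc (fun y hy => by rw [hνb hy]), Real.volume_Ioc,
    ← ENNReal.ofReal_mul hb, ← ENNReal.ofReal_add (mul_nonneg hγ0 ha)
      (mul_nonneg hb (sub_nonneg.2 hγ1)), mul_comm b]

end TwoStepDensity

section StepKernel

variable {α β γ δ x : ℝ}

lemma stepKer_of_le (hx : x ≤ γ) :
    stepKer α β γ δ x = fun y => if y ≤ γ then α else δ := by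
  ext y
  by_cases hy : y ≤ γ <;> simp [stepKer, hx, hy, not_lt.2 hx]

lemma stepKer_of_lt (hx : γ < x) :
    stepKer α β γ δ x = fun y => if y ≤ γ then δ else β := by
  ext y
  by_cases hy : y ≤ γ <;> simp [stepKer, hx, hy, not_le.2 hx]

end StepKernel

section Quadratic

variable {α β γ δ : ℝ}

def tauQuad (α β γ δ T : ℝ) : ℝ :=
  ((1 - γ) * (δ - β) + γ * (α - δ)) * T ^ 2 + ((1 - γ) * β - γ * (α - 2 * δ)) * T - γ * δ

def tauDisc (α β γ δ : ℝ) : ℝ :=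
  γ ^ 2 * ((α + β) ^ 2 - 4 * δ ^ 2) + 2 * γ * (2 * δ ^ 2 - α * β - β ^ 2) + β ^ 2

def tauRoot (α β γ δ : ℝ) : ℝ :=
  ((α + β) * γ - β + Real.sqrt (tauDisc α β γ δ)) /
    (2 * δ + γ * (α - 2 * δ + β) - β + Real.sqrt (tauDisc α β γ δ))

lemma tauDisc_eq : tauDisc α β γ δ = (β - (α + β) * γ) ^ 2 + 4 * γ * (1 - γ) * δ ^ 2 := by
  unfold tauDisc; ring

lemma tauQuad_eq_zero_of_eigen {a b c : ℝ}
    (hea : a = c * (γ * (α * a) + (1 - γ) * (δ * b)))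
    (heb : b = c * (γ * (δ * a) + (1 - γ) * (β * b)))
    (hmass : γ * a + (1 - γ) * b = 1) : tauQuad α β γ δ (γ * a) = 0 := by
  have cross : a * (γ * (δ * a) + (1 - γ) * (β * b)) = b * (γ * (α * a) + (1 - γ) * (δ * b)) := by
    linear_combination (γ * (δ * a) + (1 - γ) * (β * b)) * hea
      - (γ * (α * a) + (1 - γ) * (δ * b)) * heb
  unfold tauQuad
  linear_combination (γ * (1 - γ)) * cross
    + ((γ * α - (1 - γ) * β) * (γ * a) + γ * δ * (1 - γ * a + (1 - γ) * b)) * hmass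

variable (hγ : γ ∈ Ioo (0 : ℝ) 1) (hδ : 0 < δ)
include hγ hδ

lemma sq_lt_tauDisc : (β - (α + β) * γ) ^ 2 < tauDisc α β γ δ := by
  have hγ0 := hγ.1
  have hγ1 := sub_pos.2 hγ.2
  rw [tauDisc_eq, lt_add_iff_pos_right]
  positivity

lemma tauRoot_num_pos : 0 < (α + β) * γ - β + Real.sqrt (tauDisc α β γ δ) := by
  linarith [Real.lt_sqrt_of_sq_lt (sq_lt_tauDisc (α := α) (β := β) hγ hδ)]

lemma tauRoot_num_lt_den : (α + β) * γ - β + Real.sqrt (tauDisc α β γ δ)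
    < 2 * δ + γ * (α - 2 * δ + β) - β + Real.sqrt (tauDisc α β γ δ) := by
  linarith [mul_pos hδ (sub_pos.2 hγ.2)]

lemma tauRoot_den_pos : 0 < 2 * δ + γ * (α - 2 * δ + β) - β + Real.sqrt (tauDisc α β γ δ) :=
  (tauRoot_num_pos hγ hδ).trans (tauRoot_num_lt_den hγ hδ)

lemma tauRoot_mem_Ioo : tauRoot α β γ δ ∈ Ioo (0 : ℝ) 1 :=
  ⟨div_pos (tauRoot_num_pos hγ hδ) (tauRoot_den_pos hγ hδ),
    (div_lt_one (tauRoot_den_pos hγ hδ)).2 (tauRoot_num_lt_den hγ hδ)⟩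

lemma tauQuad_tauRoot : tauQuad α β γ δ (tauRoot α β γ δ) = 0 := by
  have hD := (tauRoot_den_pos (α := α) (β := β) hγ hδ).ne'
  have hs : Real.sqrt (tauDisc α β γ δ) ^ 2 = tauDisc α β γ δ :=
    Real.sq_sqrt ((sq_nonneg _).trans (sq_lt_tauDisc hγ hδ).le)
  rw [tauQuad, tauRoot, sub_eq_add_neg, quadratic_div_eq hD]
  refine div_eq_zero_iff.2 (Or.inl ?_)
  set s := Real.sqrt (tauDisc α β γ δ)
  rw [tauDisc] at hs
  linear_combination (δ * (1 - γ)) * hs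

lemma eq_tauRoot_of_tauQuad_eq_zero {T : ℝ} (hT : T ∈ Ioo (0 : ℝ) 1)
    (hq : tauQuad α β γ δ T = 0) : T = tauRoot α β γ δ := by
  have hq' := tauQuad_tauRoot (α := α) (β := β) hγ hδ
  rw [tauQuad, sub_eq_add_neg] at hq hq'
  -- the quadratic is `-γδ < 0` at `0` and `(1-γ)δ > 0` at `1`
  refine eq_of_quadratic_eq_zero_of_mem_Ioo hT (tauRoot_mem_Ioo hγ hδ) hq hq'
    (neg_neg_of_pos (mul_pos hγ.1 hδ)) ?_
  linarith [mul_pos (sub_pos.2 hγ.2) hδ]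

lemma eq_tauRoot_of_eigen {a b c : ℝ} (hc : c ≠ 0) (ha : 0 ≤ a) (hb : 0 ≤ b)
    (hea : a = c * (γ * (α * a) + (1 - γ) * (δ * b)))
    (heb : b = c * (γ * (δ * a) + (1 - γ) * (β * b)))
    (hmass : γ * a + (1 - γ) * b = 1) : γ * a = tauRoot α β γ δ := by
  have hcδ : c * δ ≠ 0 := mul_ne_zero hc hδ.ne'
  have ha0 : 0 < a := ha.lt_of_ne <| by
    rintro rfl
    exact hcδ (by linear_combination -(hea + c * δ * hmass))
  have hb0 : 0 < b := hb.lt_of_ne <| by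
    rintro rfl
    exact hcδ (by linear_combination -(heb + c * δ * hmass))
  refine eq_tauRoot_of_tauQuad_eq_zero hγ hδ ⟨mul_pos hγ.1 ha0, ?_⟩
    (tauQuad_eq_zero_of_eigen hea heb hmass)
  linarith [mul_pos (sub_pos.2 hγ.2) hb0]

end Quadratic

theorem tauP_formula_general (α β γ δ : ℝ)
    (hγ : γ ∈ Set.Ioo (0:ℝ) 1) (hδ : δ ∈ Set.Ioo (0:ℝ) 1)
    (lam : ℝ) (hlam : 0 < lam) (αs : ℝ) (hαs : -1 < αs)
    (ν : ℝ → ℝ) (hνnonneg : ∀ y, 0 ≤ ν y)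
    (heig : ∀ x ∈ Set.Icc (0:ℝ) 1,
      ν x = lam / (1 + αs) * ∫ y in Set.Icc (0:ℝ) 1, stepKer α β γ δ x y * ν y)
    (π : Measure ℝ)
    (hπ : π = (volume.restrict (Set.Icc (0:ℝ) 1)).withDensity
      fun y => ENNReal.ofReal (ν y))
    (hπprob : IsProbabilityMeasure π) :
    (π (Set.Icc (0:ℝ) γ)).toReal
      = ((α + β) * γ - β +
          Real.sqrt (γ ^ 2 * ((α + β) ^ 2 - 4 * δ ^ 2) +
            2 * γ * (2 * δ ^ 2 - α * β - β ^ 2) + β ^ 2)) /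
        (2 * δ + γ * (α - 2 * δ + β) - β +
          Real.sqrt (γ ^ 2 * ((α + β) ^ 2 - 4 * δ ^ 2) +
            2 * γ * (2 * δ ^ 2 - α * β - β ^ 2) + β ^ 2)) := by
  obtain ⟨hγ0, hγ1⟩ := hγ
  set c := lam / (1 + αs)
  have h0 : (0 : ℝ) ∈ Icc (0 : ℝ) 1 := ⟨le_rfl, zero_le_one⟩
  have h1 : (1 : ℝ) ∈ Icc (0 : ℝ) 1 := ⟨zero_le_one, le_rfl⟩
  have hνa : EqOn ν (fun _ => ν 0) (Icc 0 γ) := fun x hx => by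
    rw [heig x ⟨hx.1, hx.2.trans hγ1.le⟩, heig 0 h0, stepKer_of_le hx.2, stepKer_of_le hγ0.le]
  have hνb : EqOn ν (fun _ => ν 1) (Ioc γ 1) := fun x hx => by
    rw [heig x ⟨hγ0.le.trans hx.1.le, hx.2⟩, heig 1 h1, stepKer_of_lt hx.1, stepKer_of_lt hγ1]
  have hea : ν 0 = c * (γ * (α * ν 0) + (1 - γ) * (δ * ν 1)) := by
    conv_lhs => rw [heig 0 h0, stepKer_of_le hγ0.le,
      setIntegral_Icc_ite_mul hγ0.le hγ1.le hνa hνb, sub_zero]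
  have heb : ν 1 = c * (γ * (δ * ν 0) + (1 - γ) * (β * ν 1)) := by
    conv_lhs => rw [heig 1 h1, stepKer_of_lt hγ1,
      setIntegral_Icc_ite_mul hγ0.le hγ1.le hνa hνb, sub_zero]
  set a := ν 0
  set b := ν 1
  have hmass : γ * a + (1 - γ) * b = 1 := by
    have := hπprob.measure_univ
    rwa [hπ, withDensity_ofReal_restrict_Icc_apply_univ (hνnonneg 0) hνa hγ0.le hγ1.le
      (hνnonneg 1) hνb, ENNReal.ofReal_eq_one] at this
  rw [hπ, withDensity_ofReal_restrict_Icc_apply_Icc (hνnonneg 0) hνa hγ1.le,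
    ENNReal.toReal_ofReal (mul_nonneg hγ0.le (hνnonneg 0))]
  exact eq_tauRoot_of_eigen ⟨hγ0, hγ1⟩ hδ.1 (div_pos hlam (by linarith)).ne' (hνnonneg 0)
    (hνnonneg 1) hea heb hmass

/-- for the step kernel with parameters `0 < α, β, γ, δ < 1`, if `π` is a
probability measure on `[0,1]` whose density `ν` is a nonnegative eigenfunction of the
integral operator with kernel `κ`, `ν(x) = (λ/(1+α*)) ∫_0^1 κ(x,y) ν(y) dy`, then
`τ_P(γ) = π([0,γ]) = ((α+β)γ - β + s)/(2δ + γ(α - 2δ + β) - β + s)` where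
`s = √(γ²((α+β)² - 4δ²) + 2γ(2δ² - αβ - β²) + β²)`. -/
theorem tauP_formula (α β γ δ : ℝ)
    (hα : α ∈ Set.Ioo (0:ℝ) 1) (hβ : β ∈ Set.Ioo (0:ℝ) 1)
    (hγ : γ ∈ Set.Ioo (0:ℝ) 1) (hδ : δ ∈ Set.Ioo (0:ℝ) 1)
    (lam : ℝ) (hlam : 0 < lam) (αs : ℝ) (hαs : -1 < αs)
    (ν : ℝ → ℝ) (hνmeas : Measurable ν) (hνnonneg : ∀ y, 0 ≤ ν y)
    (heig : ∀ x ∈ Set.Icc (0:ℝ) 1,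
      ν x = lam / (1 + αs) * ∫ y in Set.Icc (0:ℝ) 1, stepKer α β γ δ x y * ν y)
    (π : Measure ℝ)
    (hπ : π = (volume.restrict (Set.Icc (0:ℝ) 1)).withDensity
      fun y => ENNReal.ofReal (ν y))
    (hπprob : IsProbabilityMeasure π) :
    (π (Set.Icc (0:ℝ) γ)).toReal
      = ((α + β) * γ - β +
          Real.sqrt (γ ^ 2 * ((α + β) ^ 2 - 4 * δ ^ 2) +
            2 * γ * (2 * δ ^ 2 - α * β - β ^ 2) + β ^ 2)) /
        (2 * δ + γ * (α - 2 * δ + β) - β +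
          Real.sqrt (γ ^ 2 * ((α + β) ^ 2 - 4 * δ ^ 2) +
            2 * γ * (2 * δ ^ 2 - α * β - β ^ 2) + β ^ 2)) :=
  tauP_formula_general α β γ δ hγ hδ lam hlam αs hαs ν hνnonneg heig π hπ hπprob
end
end
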